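/- In any optimal linear arrangement φ* of a tree T on n ≥ 2 vertices, the vertex labeled 1 and the vertex labeled n are both leaves of T (vertices of degree 1). -/

import Mathlib

/-!
Suppose the vertex `v` in position `0` of an optimal layout `φ` of a forest had two neighbours
`w₁, w₂` with `φ w₁ < φ w₂`, and let `S` be the side of `w₂` of the bridge `v w₂`. List `S` first,
in reverse order, and then the other vertices in their old order. Positions inside either block
are compressed, so no edge inside `S` or outside `S` gets longer; the only edge between the blocks,
`v w₂`, has length `φ w₂` before and at most `φ w₂ - 1` after, because `v` and `w₁ ∉ S` both lie
before `w₂`. This contradicts optimality, so `v` has degree at most one (exactly one in a tree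
on at least two vertices). Reversing the layout gives the same for the last vertex.
-/

open Finset SimpleGraph
open scoped Classical

variable {V : Type*}

/-- The linear arrangement cost of a layout `φ` of a graph `G`. -/
noncomputable def layoutCost [Fintype V] (G : SimpleGraph V)
    (φ : V ≃ Fin (Fintype.card V)) : ℕ :=
  ∑ e ∈ G.edgeFinset,
    Sym2.lift ⟨fun u v => (((φ u : ℕ) : ℤ) - ((φ v : ℕ) : ℤ)).natAbs,
      fun u v => by simp only []; omega⟩ e

/-- `φ` is an optimal linear arrangement of `G`. -/
def IsOLA [Fintype V] (G : SimpleGraph V) (φ : V ≃ Fin (Fintype.card V)) : Prop :=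
  ∀ ψ : V ≃ Fin (Fintype.card V), layoutCost G φ ≤ layoutCost G ψ

/-- The optimal linear arrangement cost of `G`. -/
noncomputable def olaCost [Fintype V] (G : SimpleGraph V) : ℕ :=
  sInf (Set.range (layoutCost G))

/-- Deleting a vertex: keep the vertex type, remove all incident edges. -/
def deleteVertex (G : SimpleGraph V) (w : V) : SimpleGraph V where
  Adj x y := G.Adj x y ∧ x ≠ w ∧ y ≠ w
  symm := ⟨fun x y h => ⟨h.1.symm, h.2.2, h.2.1⟩⟩
  loopless := ⟨fun x h => G.ne_of_adj h.1 rfl⟩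

/-- A Halin graph decomposition `H = T ⊎ C`. -/
structure IsHalin [Fintype V] (T C : SimpleGraph V) : Prop where
  tree : T.IsTree
  nonleaf_deg : ∀ v : V, T.degree v ≠ 1 → 3 ≤ T.degree v
  edge_disjoint : Disjoint T.edgeSet C.edgeSet
  cycle_support : ∀ v : V, v ∈ C.support ↔ T.degree v = 1
  cycle_degree : ∀ v ∈ C.support, C.degree v = 2
  cycle_connected : ∀ u v : V, u ∈ C.support → v ∈ C.support → C.Reachable u v
  three_paths : ∀ u v : V, u ≠ v → ∃ p q r : (T ⊔ C).Walk u v,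
    p.IsPath ∧ q.IsPath ∧ r.IsPath ∧
    (∀ e ∈ p.edges, e ∉ q.edges) ∧ (∀ e ∈ p.edges, e ∉ r.edges) ∧
    (∀ e ∈ q.edges, e ∉ r.edges) ∧
    (∀ e ∈ p.edges, e ∈ T.edgeSet) ∧
    ¬ (∀ e ∈ q.edges, e ∈ T.edgeSet) ∧ ¬ (∀ e ∈ r.edges, e ∈ T.edgeSet)

/-- The subtree hanging at `c` after removing vertex `v`. -/
def subtreeAt (T : SimpleGraph V) (v c : V) : Set V :=
  {x | (deleteVertex T v).Reachable x c}

/-- A rooted tree is recursively balanced. -/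
def IsRecBalanced (T : SimpleGraph V) (r : V) : Prop :=
  ∀ v c c' : V, T.Adj v c → T.Adj v c' →
    T.dist r c = T.dist r v + 1 → T.dist r c' = T.dist r v + 1 →
    Nat.card (subtreeAt T v c) = Nat.card (subtreeAt T v c')

/-- `r` is a central vertex of `T`. -/
def IsCentral [Fintype V] (T : SimpleGraph V) (r : V) : Prop :=
  ∀ u : V, u ≠ r → Nat.card (subtreeAt T r u) ≤ Fintype.card V / 2

section RankBelow

variable [Fintype V] {p : V → Prop} {f : V → ℕ}

variable (p f) in
noncomputable def rankBelow (x : V) : ℕ := #{a | p a ∧ f a < f x}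

lemma rankBelow_lt_card {x : V} (hx : p x) : rankBelow p f x < #{a | p a} := by
  refine card_lt_card ⟨monotone_filter_right _ fun _ _ h => h.1, fun h => ?_⟩
  simpa using h (mem_filter.mpr ⟨mem_univ x, hx⟩)

lemma rankBelow_lt_rankBelow {x z : V} (hx : p x) (h : f x < f z) :
    rankBelow p f x < rankBelow p f z := by
  refine card_lt_card ⟨monotone_filter_right _ fun _ _ ha => ⟨ha.1, ha.2.trans h⟩, fun hs => ?_⟩
  simpa using hs (mem_filter.mpr ⟨mem_univ x, hx, h⟩)

lemma rankBelow_injOn (hf : Function.Injective f) : Set.InjOn (rankBelow p f) {x | p x} := by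
  intro x hx z hz hxz
  rcases lt_trichotomy (f x) (f z) with h | h | h
  · exact absurd hxz (rankBelow_lt_rankBelow hx h).ne
  · exact hf h
  · exact absurd hxz (rankBelow_lt_rankBelow hz h).ne'

lemma rankBelow_add_card_filter_Ico {x z : V} (h : f x ≤ f z) :
    rankBelow p f x + #{a | p a ∧ f a ∈ Ico (f x) (f z)} = rankBelow p f z := by
  rw [rankBelow, rankBelow, ← card_union_of_disjoint]
  · congr 1; ext a; simp only [mem_union, mem_filter, mem_univ, true_and, mem_Ico]
    rw [← and_or_left]
    exact and_congr_right fun _ => by omega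
  · exact disjoint_filter.mpr fun a _ ha hb => (mem_Ico.mp hb.2).1.not_gt ha.2

variable (p) in
lemma card_filter_Ico_add_card_filter_not_Ico_le (hf : Function.Injective f) (lo hi : ℕ) :
    #{a | p a ∧ f a ∈ Ico lo hi} + #{a | ¬ p a ∧ f a ∈ Ico lo hi} ≤ hi - lo := by
  rw [← card_union_of_disjoint (disjoint_filter.mpr fun a _ ha hb => hb.1 ha.1), ← Nat.card_Ico]
  refine card_le_card_of_injOn f (fun a ha => ?_) hf.injOn
  rw [coe_union, Set.mem_union, mem_coe, mem_coe, mem_filter, mem_filter] at ha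
  exact mem_coe.mpr (ha.elim (·.2.2) (·.2.2))

lemma natAbs_rankBelow_sub_le (hf : Function.Injective f) (x z : V) :
    ((rankBelow p f x : ℤ) - rankBelow p f z).natAbs ≤ ((f x : ℤ) - f z).natAbs := by
  wlog h : f x ≤ f z generalizing x z
  · have := this z x (by omega)
    omega
  have := rankBelow_add_card_filter_Ico (p := p) h
  have := card_filter_Ico_add_card_filter_not_Ico_le p hf (f x) (f z)
  omega

end RankBelow

section ConcatLayout

variable [Fintype V] {p : V → Prop} {g f : V → ℕ}

variable (p g f) in
noncomputable def concatPos (x : V) : ℕ :=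
  if p x then rankBelow p g x else #{a | p a} + rankBelow (¬ p ·) f x

lemma concatPos_lt_card (x : V) : concatPos p g f x < Fintype.card V := by
  have hsplit : #{a | p a} + #{a | ¬ p a} = Fintype.card V := card_filter_add_card_filter_not _
  unfold concatPos
  split_ifs with hx
  · have := rankBelow_lt_card (f := g) hx
    omega
  · have : rankBelow (¬ p ·) f x < #{a | ¬ p a} := by
      convert rankBelow_lt_card (p := (¬ p ·)) (f := f) hx
    omega

lemma concatPos_injective (hg : Function.Injective g) (hf : Function.Injective f) :
    Function.Injective (concatPos p g f) := by
  intro x z hxz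
  by_cases hx : p x <;> by_cases hz : p z <;> simp only [concatPos, hx, hz, if_true, if_false] at hxz
  · exact rankBelow_injOn hg hx hz hxz
  · exact absurd hxz (by have := rankBelow_lt_card (f := g) hx; omega)
  · exact absurd hxz.symm (by have := rankBelow_lt_card (f := g) hz; omega)
  · exact rankBelow_injOn (p := (¬ p ·)) hf hx hz (by omega)

variable (p g f) in
noncomputable def concatLayout (hg : Function.Injective g) (hf : Function.Injective f) :
    V ≃ Fin (Fintype.card V) :=
  Equiv.ofBijective (fun x => ⟨concatPos p g f x, concatPos_lt_card x⟩) <|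
    (Fintype.bijective_iff_injective_and_card _).mpr
      ⟨fun _ _ h => concatPos_injective hg hf (congrArg Fin.val h), (Fintype.card_fin _).symm⟩

lemma concatLayout_apply (hg : Function.Injective g) (hf : Function.Injective f) (x : V) :
    (concatLayout p g f hg hf x : ℕ) = concatPos p g f x := rfl

end ConcatLayout

section LayoutCost

variable [Fintype V] {G : SimpleGraph V}

def layoutDist (φ : V ≃ Fin (Fintype.card V)) (x z : V) : ℕ :=
  (((φ x : ℕ) : ℤ) - ((φ z : ℕ) : ℤ)).natAbs

lemma layoutDist_comm (φ : V ≃ Fin (Fintype.card V)) (x z : V) :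
    layoutDist φ x z = layoutDist φ z x := by
  unfold layoutDist
  omega

lemma layoutCost_le_of_forall_adj {φ ψ : V ≃ Fin (Fintype.card V)}
    (h : ∀ x z, G.Adj x z → layoutDist ψ x z ≤ layoutDist φ x z) :
    layoutCost G ψ ≤ layoutCost G φ := by
  refine sum_le_sum fun e he => ?_
  induction e using Sym2.ind with
  | _ x z => exact h x z (mem_edgeFinset.mp he)

lemma layoutCost_lt_of_forall_adj {φ ψ : V ≃ Fin (Fintype.card V)}
    (h : ∀ x z, G.Adj x z → layoutDist ψ x z ≤ layoutDist φ x z) {v w : V} (hvw : G.Adj v w)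
    (hlt : layoutDist ψ v w < layoutDist φ v w) :
    layoutCost G ψ < layoutCost G φ := by
  refine sum_lt_sum (fun e he => ?_) ⟨s(v, w), mem_edgeFinset.mpr hvw, hlt⟩
  induction e using Sym2.ind with
  | _ x z => exact h x z (mem_edgeFinset.mp he)

lemma layoutCost_trans_revPerm (G : SimpleGraph V) (φ : V ≃ Fin (Fintype.card V)) :
    layoutCost G (φ.trans Fin.revPerm) = layoutCost G φ := by
  have hdist (x z : V) : layoutDist (φ.trans Fin.revPerm) x z = layoutDist φ x z := by
    simp only [layoutDist, Equiv.trans_apply, Fin.revPerm_apply, Fin.val_rev]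
    omega
  exact le_antisymm (layoutCost_le_of_forall_adj fun x z _ => (hdist x z).le)
    (layoutCost_le_of_forall_adj fun x z _ => (hdist x z).ge)

lemma IsOLA.trans_revPerm {φ : V ≃ Fin (Fintype.card V)} (hφ : IsOLA G φ) :
    IsOLA G (φ.trans Fin.revPerm) := fun ψ => by
  simpa only [layoutCost_trans_revPerm] using hφ (ψ.trans Fin.revPerm)

end LayoutCost

section ReverseToFront

lemma injective_val_rev {n : ℕ} (φ : V ≃ Fin n) : Function.Injective fun a => ((φ a).rev : ℕ) :=
  fun _ _ h => φ.injective (Fin.rev_injective (Fin.val_injective h))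

lemma injective_val {n : ℕ} (φ : V ≃ Fin n) : Function.Injective fun a => (φ a : ℕ) :=
  fun _ _ h => φ.injective (Fin.val_injective h)

variable [Fintype V] (φ : V ≃ Fin (Fintype.card V)) (S : Set V)

noncomputable def reverseToFront : V ≃ Fin (Fintype.card V) :=
  concatLayout (· ∈ S) _ _ (injective_val_rev φ) (injective_val φ)

variable {φ S}

lemma layoutDist_reverseToFront_le {x z : V} (h : x ∈ S ↔ z ∈ S) :
    layoutDist (reverseToFront φ S) x z ≤ layoutDist φ x z := by
  simp only [layoutDist, reverseToFront, concatLayout_apply, concatPos]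
  by_cases hx : x ∈ S
  · have := natAbs_rankBelow_sub_le (p := (· ∈ S)) (injective_val_rev φ) x z
    simp only [hx, h.mp hx, if_true, Fin.val_rev] at this ⊢
    omega
  · have := natAbs_rankBelow_sub_le (p := (· ∉ S)) (injective_val φ) x z
    simp only [hx, mt h.mpr hx, if_false] at this ⊢
    omega

lemma layoutDist_reverseToFront_lt {u v w : V} (hv : (φ v : ℕ) = 0) (hvS : v ∉ S) (hwS : w ∈ S)
    (huS : u ∉ S) (huv : u ≠ v) (huw : φ u < φ w) :
    layoutDist (reverseToFront φ S) v w < layoutDist φ v w := by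
  simp only [layoutDist, reverseToFront, concatLayout_apply, hv]
  set g : V → ℕ := fun a => ((φ a).rev : ℕ)
  have hpos (a : V) (ha : a ≠ v) : 0 < (φ a : ℕ) := by
    have := (injective_val φ).ne ha
    omega
  have hv_pos : concatPos (· ∈ S) g (fun a => (φ a : ℕ)) v = #{a | a ∈ S} := by
    simp only [concatPos, hvS, if_false, rankBelow, hv, Nat.not_lt_zero, and_false,
      filter_false, card_empty, add_zero]
  have hw_pos : concatPos (· ∈ S) g (fun a => (φ a : ℕ)) w = rankBelow (· ∈ S) g w := by
    simp only [concatPos, hwS, if_true]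
  have hv_rank : rankBelow (· ∈ S) g v = #{a | a ∈ S} := by
    refine congrArg card (filter_congr fun a _ => and_iff_left_of_imp fun ha => ?_)
    have := hpos a (ne_of_mem_of_not_mem ha hvS)
    simp only [g, Fin.val_rev]
    omega
  have hgw : g w ≤ g v := by simp only [g, Fin.val_rev]; omega
  have hwindow := rankBelow_add_card_filter_Ico (p := (· ∈ S)) hgw
  have hsplit := card_filter_Ico_add_card_filter_not_Ico_le (· ∈ S) (f := g)
    (injective_val_rev φ) (g w) (g v)
  have hu : 0 < #{a | a ∉ S ∧ g a ∈ Ico (g w) (g v)} := by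
    refine card_pos.mpr ⟨u, mem_filter.mpr ⟨mem_univ u, huS, mem_Ico.mpr ⟨?_, ?_⟩⟩⟩
    · simp only [g, Fin.val_rev]; omega
    · have := hpos u huv
      simp only [g, Fin.val_rev]; omega
  have hgvw : g v - g w = φ w := by simp only [g, Fin.val_rev]; omega
  omega

end ReverseToFront

theorem IsOLA.degree_le_one_of_isAcyclic [Fintype V] {G : SimpleGraph V} (hG : G.IsAcyclic)
    {φ : V ≃ Fin (Fintype.card V)} (hφ : IsOLA G φ) {v : V} (hv : (φ v : ℕ) = 0) :
    G.degree v ≤ 1 := by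
  by_contra! h
  obtain ⟨w₁, hw₁, w₂, hw₂, hne⟩ := one_lt_card.mp h
  wlog hlt : φ w₁ < φ w₂ generalizing w₁ w₂
  · exact this w₂ hw₂ w₁ hw₁ hne.symm (lt_of_le_of_ne (not_lt.mp hlt) (φ.injective.ne hne.symm))
  rw [mem_neighborFinset] at hw₁ hw₂
  set S : Set V := {x | (G.deleteEdges {s(v, w₂)}).Reachable w₂ x}
  have hvS : v ∉ S := fun hreach => isAcyclic_iff_forall_adj_isBridge.mp hG hw₂ hreach.symm
  have hclosed {x z : V} (hx : x ∈ S) (hxz : G.Adj x z) (hne : s(x, z) ≠ s(v, w₂)) : z ∈ S :=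
    hx.trans (Adj.reachable (by simp [hxz, hne]))
  have hw₁S : w₁ ∉ S := fun h => hvS (hclosed h hw₁.symm (by simp [hne, hw₂.ne]))
  have hshorter : layoutDist (reverseToFront φ S) v w₂ < layoutDist φ v w₂ :=
    layoutDist_reverseToFront_lt hv hvS (Reachable.refl _) hw₁S hw₁.ne' hlt
  have hdist {x z : V} (hxz : G.Adj x z) :
      layoutDist (reverseToFront φ S) x z ≤ layoutDist φ x z := by
    by_cases hcross : s(x, z) = s(v, w₂)
    · rcases Sym2.eq_iff.mp hcross with ⟨rfl, rfl⟩ | ⟨rfl, rfl⟩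
      · exact hshorter.le
      · rw [layoutDist_comm, layoutDist_comm φ]
        exact hshorter.le
    · exact layoutDist_reverseToFront_le
        ⟨(hclosed · hxz hcross), (hclosed · hxz.symm (by rwa [Sym2.eq_swap]))⟩
  exact (hφ _).not_gt (layoutCost_lt_of_forall_adj (fun _ _ => hdist) hw₂ hshorter)

/-- In any optimal linear arrangement of a tree on `n ≥ 2` vertices,
the vertices labeled `1` and `n` (here: labels `0` and `n-1`, zero-indexed) are leaves. -/
theorem extreme_vertices_of_tree_ola_are_leaves [Fintype V]
    (T : SimpleGraph V) (hT : T.IsTree) (hn : 2 ≤ Fintype.card V)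
    (φ : V ≃ Fin (Fintype.card V)) (hφ : IsOLA T φ) :
    ∀ v u : V, (φ v : ℕ) = 0 → (φ u : ℕ) = Fintype.card V - 1 →
      T.degree v = 1 ∧ T.degree u = 1 := by
  intro v u hv hu
  have : Nontrivial V := Fintype.one_lt_card_iff_nontrivial.mp hn
  have hpos (x : V) : 0 < T.degree x := hT.connected.preconnected.degree_pos_of_nontrivial x
  have hu_rev : ((φ.trans Fin.revPerm) u : ℕ) = 0 := by
    simp only [Equiv.trans_apply, Fin.revPerm_apply, Fin.val_rev]
    omega
  have hv_le := hφ.degree_le_one_of_isAcyclic hT.isAcyclic hv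
  have hu_le := hφ.trans_revPerm.degree_le_one_of_isAcyclic hT.isAcyclic hu_rev
  exact ⟨le_antisymm hv_le (hpos v), le_antisymm hu_le (hpos u)⟩
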